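/- arXiv:alg-geom/9704010 — 3 statements merged into one kernel-verified Lean document; each statement's English description precedes it below -/
import Mathlib

section
/- Let α = √2+1, β = 3-2√2, d > 0 real, and define φ(λ) = β(1+α)(2λ - λ²/d) and ψ(λ) = λ for 0 ≤ λ ≤ d√β/(1+√β), ψ(λ) = √(2β(d-λ)² - λ²) for d√β/(1+√β) ≤ λ ≤ d√(2β)/(1+√(2β)). Then ψ(λ) ≤ φ(λ) for all λ in [0, d√(2β)/(1+√(2β))]. -/
open Real

/-- Step 4 of Lemma 2.1: with α = √2+1, β = 3-2√2 and d > 0, the piecewise bound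
ψ(λ) is dominated by φ(λ) = β(1+α)(2λ - λ²/d) on [0, d√(2β)/(1+√(2β))]. -/
theorem psi_le_phi (d lam : ℝ) (hd : 0 < d)
    (h0 : 0 ≤ lam)
    (h1 : lam ≤ d * Real.sqrt (2 * (3 - 2 * Real.sqrt 2))
            / (1 + Real.sqrt (2 * (3 - 2 * Real.sqrt 2)))) :
    (if lam ≤ d * Real.sqrt (3 - 2 * Real.sqrt 2) / (1 + Real.sqrt (3 - 2 * Real.sqrt 2))
      then lam
      else Real.sqrt (2 * (3 - 2 * Real.sqrt 2) * (d - lam) ^ 2 - lam ^ 2))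
    ≤ (3 - 2 * Real.sqrt 2) * (1 + (Real.sqrt 2 + 1)) * (2 * lam - lam ^ 2 / d) := by
  set s := Real.sqrt 2 with hs
  have hs2 : s ^ 2 = 2 := Real.sq_sqrt (by norm_num)
  have hs0 : 0 ≤ s := Real.sqrt_nonneg 2
  have hs1 : 1 < s := by nlinarith
  have hs15 : s < 3/2 := by nlinarith
  have e1 : Real.sqrt (3 - 2 * s) = s - 1 := by
    rw [show (3 - 2*s : ℝ) = (s - 1)^2 by nlinarith]
    exact Real.sqrt_sq (by linarith)
  have e2 : Real.sqrt (2 * (3 - 2 * s)) = 2 - s := by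
    rw [show (2 * (3 - 2*s) : ℝ) = (2 - s)^2 by nlinarith]
    exact Real.sqrt_sq (by linarith)
  rw [e2] at h1
  rw [e1]
  have h1' : lam * (3 - s) ≤ d * (2 - s) := by
    rw [le_div_iff₀ (by linarith)] at h1
    calc lam * (3 - s) = lam * (1 + (2 - s)) := by ring
      _ ≤ d * (2 - s) := h1
  have hphi : (3 - 2 * s) * (1 + (s + 1)) * (2 * lam - lam ^ 2 / d)
      = (2 - s) * (2 * lam * d - lam ^ 2) / d := by
    have hcoef : (3 - 2*s) * (1 + (s + 1)) = 2 - s := by linear_combination (-2 : ℝ) * hs2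
    rw [hcoef]; field_simp
  rw [hphi]
  split_ifs with hc
  · -- lam ≤ d*(s-1)/(1+(s-1))
    rw [le_div_iff₀ (by linarith)] at hc
    rw [le_div_iff₀ hd]
    nlinarith [mul_nonneg h0 (sub_nonneg.2 hc), hs2, mul_pos hd hd, sq_nonneg lam,
      mul_nonneg (mul_nonneg h0 hs0) (sub_nonneg.2 hc)]
  · push_neg at hc
    rw [div_lt_iff₀ (by linarith)] at hc
    have hu : 0 ≤ 2 * lam - d * (2 - s) := by nlinarith
    have hv : 0 ≤ d * (2 - s) - lam * (3 - s) := by linarith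
    have hnum : 0 ≤ (2 - s) * (2 * lam * d - lam ^ 2) := by nlinarith
    rw [show (2-s) * (2*lam*d - lam^2) / d = Real.sqrt (((2-s)*(2*lam*d-lam^2)/d)^2) from
      (Real.sqrt_sq (by positivity)).symm]
    apply Real.sqrt_le_sqrt
    rw [div_pow, le_div_iff₀ (by positivity)]
    have key : ((2-s) * (2*lam*d - lam^2))^2 - (2 * (3 - 2*s) * (d - lam)^2 - lam^2) * d^2
        = (218 + 154*s) * ((2*lam - d*(2-s)) * (d*(2-s) - lam*(3-s))^3)
          + (1055/2 + 372*s) * ((2*lam - d*(2-s))^2 * (d*(2-s) - lam*(3-s))^2)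
          + (425 + 299*s) * ((2*lam - d*(2-s))^3 * (d*(2-s) - lam*(3-s)))
          + (114 + 80*s) * ((2*lam - d*(2-s))^4) := by
      linear_combination ((-9:ℝ)*d^4 + 138*lam*d^3 + (-1245/2)*lam^2*d^2 + 1072*lam^3*d
          + (-582)*lam^4 + 14*s*d^4 + (-208)*s*lam*d^3 + 981*s*lam^2*d^2
          + (-1742)*s*lam^3*d + 848*s*lam^4 + (-13/2)*s^2*d^4 + 103*s^2*lam*d^3
          + (-1031/2)*s^2*lam^2*d^2 + 912*s^2*lam^3*d + (-308)*s^2*lam^4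
          + s^3*d^4 + (-17)*s^3*lam*d^3 + 90*s^3*lam^2*d^2 + (-154)*s^3*lam^3*d
          + (2*lam*d - lam^2)^2) * hs2
    have t1 : 0 ≤ (218 + 154*s) * ((2*lam - d*(2-s)) * (d*(2-s) - lam*(3-s))^3) :=
      mul_nonneg (by linarith) (mul_nonneg hu (pow_nonneg hv 3))
    have t2 : 0 ≤ (1055/2 + 372*s) * ((2*lam - d*(2-s))^2 * (d*(2-s) - lam*(3-s))^2) :=
      mul_nonneg (by linarith) (mul_nonneg (pow_nonneg hu 2) (pow_nonneg hv 2))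
    have t3 : 0 ≤ (425 + 299*s) * ((2*lam - d*(2-s))^3 * (d*(2-s) - lam*(3-s))) :=
      mul_nonneg (by linarith) (mul_nonneg (pow_nonneg hu 3) hv)
    have t4 : 0 ≤ (114 + 80*s) * ((2*lam - d*(2-s))^4) :=
      mul_nonneg (by linarith) (pow_nonneg hu 4)
    linarith [key, t1, t2, t3, t4]
end

section
/- For any real numbers α > 1 and β > 0 satisfying (α+2)β ≤ 1, α-1 ≥ β(α+α²), β ≤ ((√(4α³+α²-4α)+α-2)/(2(1+α+α²)))², and 1/β ≥ 8+α, one has β ≤ 1/((31-3√85)/2 + 8). In other words, β₀ = 0.10340... is the maximal value of β subject to these constraints. -/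
set_option maxHeartbeats 1000000

open Real

theorem key (α t s : ℝ) (hα : 1 < α) (ht : 0 < t) (hs : 0 ≤ s) (hs2 : s^2 = 85)
    (hg : (1+α+α^2)*t^2 - (α-2)*t - (α-1) ≤ 0)
    (h4 : (8+α)*t^2 ≤ 1) :
    t^2 * (47 - 3*s) ≤ 2 := by
  have hs9 : 9 ≤ s := by nlinarith
  have hs10 : s ≤ 10 := by nlinarith
  rcases le_or_gt (t + 15*t^2) 1 with h15 | h15
  · nlinarith [sq_nonneg t]
  · have hA : α * t^2 ≤ 1 - 8*t^2 := by nlinarith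
    have hbr : α*t^4 - 7*t^4 - t^3 ≤ 0 := by nlinarith [sq_nonneg t, mul_pos ht ht]
    have hprod : 0 ≤ ((1 - 8*t^2) - α*t^2) * (-(α*t^4 - 7*t^4 - t^3)) :=
      mul_nonneg (by linarith) (by linarith)
    have ht4g : t^4 * ((1+α+α^2)*t^2 - (α-2)*t - (α-1)) ≤ 0 :=
      mul_nonpos_of_nonneg_of_nonpos (by positivity) hg
    have hgA : t^2*(57*t^4 + 10*t^3 - 6*t^2 - t) ≤ 0 := by nlinarith [hprod, ht4g]
    have hq : 19*t^2 - 3*t - 1 ≤ 0 :=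
      nonpos_of_mul_nonpos_right (by nlinarith [mul_pos ht ht]) (by positivity)
    have htle : t ≤ (3+s)/38 := by nlinarith
    nlinarith [sq_nonneg t]

/-- Step 5 of Lemma 3.1: β₀ = ((31-3√85)/2 + 8)⁻¹ is the maximal β allowed by the
four numerical constraints of the induction, for any α > 1. -/
theorem beta0_maximal (α β : ℝ) (hα : 1 < α) (hβ : 0 < β)
    (h1 : (α + 2) * β ≤ 1)
    (h2 : α - 1 ≥ β * (α + α ^ 2))
    (h3 : β ≤ ((Real.sqrt (4 * α ^ 3 + α ^ 2 - 4 * α) + α - 2) / (2 * (1 + α + α ^ 2))) ^ 2)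
    (h4 : 1 / β ≥ 8 + α) :
    β ≤ 1 / ((31 - 3 * Real.sqrt 85) / 2 + 8) := by
  set s := Real.sqrt 85 with hsdef
  have hs : 0 ≤ s := Real.sqrt_nonneg _
  have hs2 : s ^ 2 = 85 := Real.sq_sqrt (by norm_num)
  have hs10 : s ≤ 10 := by nlinarith
  set t := Real.sqrt β with htdef
  have ht : 0 < t := Real.sqrt_pos.2 hβ
  have ht2 : t ^ 2 = β := Real.sq_sqrt hβ.le
  have hDpos : (0:ℝ) ≤ 4 * α ^ 3 + α ^ 2 - 4 * α := by nlinarith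
  set u := Real.sqrt (4 * α ^ 3 + α ^ 2 - 4 * α) with hudef
  have hu : 0 ≤ u := Real.sqrt_nonneg _
  have hu2 : u ^ 2 = 4 * α ^ 3 + α ^ 2 - 4 * α := Real.sq_sqrt hDpos
  clear_value s t u
  have h2a : 2 - α ≤ u := by
    by_contra h
    push_neg at h
    nlinarith [hu]
  have hden : (0:ℝ) < 2 * (1 + α + α ^ 2) := by nlinarith
  have ha2 : α - 2 ≤ u := by
    by_contra h
    push_neg at h
    nlinarith [hu]
  have hR : 0 ≤ (u + α - 2) / (2 * (1 + α + α ^ 2)) :=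
    div_nonneg (by linarith) hden.le
  have htR : t ≤ (u + α - 2) / (2 * (1 + α + α ^ 2)) := by
    calc t = Real.sqrt β := htdef
    _ ≤ Real.sqrt (((u + α - 2) / (2 * (1 + α + α ^ 2))) ^ 2) := Real.sqrt_le_sqrt h3
    _ = (u + α - 2) / (2 * (1 + α + α ^ 2)) := by
        rw [Real.sqrt_sq hR]
  have ha : 2 * (1 + α + α ^ 2) * t ≤ u + α - 2 := by
    rw [le_div_iff₀ hden] at htR
    linarith
  -- derive hg
  have hupa : 0 ≤ u + (2 * (1 + α + α ^ 2) * t - (α - 2)) := by nlinarith [mul_pos hden ht]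
  have huma : 0 ≤ u - (2 * (1 + α + α ^ 2) * t - (α - 2)) := by linarith
  have hg : (1 + α + α ^ 2) * t ^ 2 - (α - 2) * t - (α - 1) ≤ 0 := by
    nlinarith [mul_nonneg huma hupa, hu2, sq_nonneg t, mul_pos hden ht]
  have h4' : (8 + α) * t ^ 2 ≤ 1 := by
    have hβ' : (8 + α) * β ≤ 1 := by
      rw [ge_iff_le, le_div_iff₀ hβ] at h4
      linarith
    rw [ht2]; exact hβ'
  have hkey := key α t s hα ht hs hs2 hg h4'
  have hXpos : (0:ℝ) < (31 - 3 * s) / 2 + 8 := by nlinarith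
  rw [le_div_iff₀ hXpos]
  nlinarith [hkey, ht2]
end

section
/- Let α = √2+1, β = 3-2√2, and let d, λ, m be reals with 0 ≤ m ≤ λ ≤ d and 2·β(d-λ)² > λ² + m². If moreover m ≤ ψ(λ) as in the two-case bound ψ(λ) = λ for λ ≤ d√β/(1+√β) and ψ(λ) = √(2β(d-λ)²-λ²) otherwise, then (α-1)d² + d - αmd ≥ (α+α²)β(d-λ)². -/
open Real

set_option maxHeartbeats 1000000 in
/-- Inequality (2.15) from Step 4 of Lemma 2.1: with α = √2+1, β = 3-2√2,
0 ≤ m ≤ λ ≤ d, 2β(d-λ)² > λ² + m², and m bounded by the two-case function ψ(λ),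
one has (α-1)d² + d - αmd ≥ (α+α²)β(d-λ)². -/
theorem step4_inequality (d lam m : ℝ)
    (h0 : 0 ≤ m) (h1 : m ≤ lam) (h2 : lam ≤ d)
    (hdeg : 2 * (3 - 2 * Real.sqrt 2) * (d - lam) ^ 2 > lam ^ 2 + m ^ 2)
    (hψ : m ≤ if lam ≤ d * Real.sqrt (3 - 2 * Real.sqrt 2) / (1 + Real.sqrt (3 - 2 * Real.sqrt 2))
            then lam
            else Real.sqrt (2 * (3 - 2 * Real.sqrt 2) * (d - lam) ^ 2 - lam ^ 2)) :
    let α : ℝ := Real.sqrt 2 + 1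
    let β : ℝ := 3 - 2 * Real.sqrt 2
    (α - 1) * d ^ 2 + d - α * m * d ≥ (α + α ^ 2) * β * (d - lam) ^ 2 := by
  intro α β
  show (Real.sqrt 2 + 1 - 1) * d ^ 2 + d - (Real.sqrt 2 + 1) * m * d ≥
      ((Real.sqrt 2 + 1) + (Real.sqrt 2 + 1) ^ 2) * (3 - 2 * Real.sqrt 2) * (d - lam) ^ 2
  clear_value α β
  clear α β
  have hs2 : Real.sqrt 2 ^ 2 = 2 := Real.sq_sqrt (by norm_num)
  have hsnn : (0 : ℝ) ≤ Real.sqrt 2 := Real.sqrt_nonneg 2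
  generalize hgen : Real.sqrt 2 = s at hdeg hψ hs2 hsnn ⊢
  have hs1 : (1 : ℝ) ≤ s := by nlinarith
  have hslt : s < 3 / 2 := by nlinarith
  have hlam0 : 0 ≤ lam := le_trans h0 h1
  have hdlam : lam < d := by
    rcases lt_or_eq_of_le h2 with h | h
    · exact h
    · exfalso; rw [h] at hdeg; nlinarith
  have hd : 0 < d := lt_of_le_of_lt hlam0 hdlam
  have hβ : Real.sqrt (3 - 2 * s) = s - 1 := by
    rw [show (3 - 2 * s) = (s - 1) ^ 2 by nlinarith]
    exact Real.sqrt_sq (by linarith)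
  rw [hβ] at hψ
  have hco : ((s + 1) + (s + 1) ^ 2) * (3 - 2 * s) = s := by
    linear_combination (-2 * s - 3) * hs2
  rw [hco]
  split_ifs at hψ with hc
  · -- Case 1 : lam ≤ d (s-1)/s
    have hc' : lam * (1 + (s - 1)) ≤ d * (s - 1) :=
      (le_div_iff₀ (by linarith)).mp hc
    have hc'' : s * lam ≤ (s - 1) * d := by linarith [hc']
    nlinarith [mul_nonneg (sub_nonneg.mpr hc'') hlam0,
      mul_nonneg (by linarith : (0:ℝ) ≤ s + 1)
        (mul_nonneg (sub_nonneg.mpr hψ) hd.le), hd.le]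
  · -- Case 2 : lam > d (s-1)/s
    push_neg at hc
    have hc' : d * (s - 1) < lam * (1 + (s - 1)) :=
      (div_lt_iff₀ (by linarith)).mp hc
    have hc'' : (s - 1) * d ≤ s * lam := by linarith
    have hu : 0 ≤ 2 * lam - (2 - s) * d := by
      nlinarith [mul_le_mul_of_nonneg_left hc'' hsnn, hs2]
    have hE : 0 ≤ 2 * (3 - 2 * s) * (d - lam) ^ 2 - lam ^ 2 := by nlinarith
    have hm2 : m ^ 2 ≤ 2 * (3 - 2 * s) * (d - lam) ^ 2 - lam ^ 2 := by
      have h := pow_le_pow_left₀ h0 hψ 2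
      rwa [Real.sq_sqrt hE] at h
    have hcube : 0 ≤ 2 * lam ^ 3 - (6 + s) * d * lam ^ 2 + (4 + 4 * s) * d ^ 2 * lam
        + (4 + 2 * s) * d ^ 3 := by
      nlinarith [mul_nonneg (mul_nonneg (sub_nonneg.mpr h2) hlam0) hd.le,
        mul_nonneg (mul_nonneg hlam0 hlam0) hlam0,
        mul_nonneg (mul_nonneg hd.le hd.le) hd.le, hs1]
    have hGe : 2 * (2 * lam ^ 4 - 8 * d * lam ^ 3 + (9 + 2 * s) * d ^ 2 * lam ^ 2
        + 4 * d ^ 3 * lam - 2 * d ^ 4)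
        = (2 * lam - (2 - s) * d) * (2 * lam ^ 3 - (6 + s) * d * lam ^ 2
          + (4 + 4 * s) * d ^ 2 * lam + (4 + 2 * s) * d ^ 3) := by
      linear_combination (d ^ 2 * lam ^ 2 - 4 * d ^ 3 * lam - 2 * d ^ 4) * hs2
    have hG : 0 ≤ 2 * lam ^ 4 - 8 * d * lam ^ 3 + (9 + 2 * s) * d ^ 2 * lam ^ 2
        + 4 * d ^ 3 * lam - 2 * d ^ 4 := by
      linarith [mul_nonneg hu hcube, hGe]
    have hQ : 0 ≤ s * lam * (2 * d - lam) := by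
      apply mul_nonneg (mul_nonneg hsnn hlam0); linarith
    have hP : 0 ≤ (s + 1) * m * d := by positivity
    have hid : (s * lam * (2 * d - lam)) ^ 2 - ((s + 1) * m * d) ^ 2
        = (3 + 2 * s) * d ^ 2
            * ((2 * (3 - 2 * s) * (d - lam) ^ 2 - lam ^ 2) - m ^ 2)
          + (2 * lam ^ 4 - 8 * d * lam ^ 3 + (9 + 2 * s) * d ^ 2 * lam ^ 2
            + 4 * d ^ 3 * lam - 2 * d ^ 4) := by
      linear_combination (lam ^ 2 * (2 * d - lam) ^ 2 - m ^ 2 * d ^ 2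
        + 8 * d ^ 2 * (d - lam) ^ 2) * hs2
    have hsq : ((s + 1) * m * d) ^ 2 ≤ (s * lam * (2 * d - lam)) ^ 2 := by
      nlinarith [hid, hG, mul_nonneg (mul_nonneg
        (by linarith : (0:ℝ) ≤ 3 + 2 * s) (sq_nonneg d)) (sub_nonneg.mpr hm2)]
    have hkey : (s + 1) * m * d ≤ s * lam * (2 * d - lam) := by
      nlinarith [hsq, hP, hQ]
    nlinarith [hkey, hd.le]
end
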